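/- arXiv:1808.03829 — 2 statements merged into one kernel-verified Lean document; each statement's English description precedes it below -/
import Mathlib

section
/- The continuous ranked probability score of the Weibull(α,β) cdf F at observation y ≥ 0 equals y(2F(y) − 1) − 2β·γ(1+1/α, (y/β)^α) + 2^{−1/α} β Γ(1+1/α). -/
/-!
With `S t = exp (-(t / β) ^ α)` the integrand is `(1 - S)² = 1 - 2S + S²` on `[0, y)`, `S²` on
`[y, ∞)` and `0` on `(-∞, 0)`, so the CRPS equals `y - 2 ∫₀^y S + ∫₀^∞ S²`. After the substitution
`t ↦ t / β`, `t ↦ γ(1 + 1/α, t ^ α) + t exp (-t ^ α)` is an antiderivative of `exp (-t ^ α)`, and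
`∫₀^∞ S² = ∫₀^∞ exp (-2 (t / β) ^ α)` is a Gamma integral.
-/

open MeasureTheory ProbabilityTheory Real

/-- Lower incomplete gamma function `γ(s,z) = ∫₀^z t^{s−1} e^{−t} dt`. -/
noncomputable def lowerIncGamma (s z : ℝ) : ℝ :=
  ∫ t in Set.Ioc (0 : ℝ) z, t ^ (s - 1) * Real.exp (-t)

open Set

theorem sq_ite_sub_indicator_Ici (S : ℝ → ℝ) {y : ℝ} (hy : 0 ≤ y) (t : ℝ) :
    ((if 0 ≤ t then 1 - S t else 0) - (Ici y).indicator (fun _ => (1 : ℝ)) t) ^ 2 =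
      (Ico 0 y).indicator (fun t => 1 - 2 * S t) t + (Ici 0).indicator (fun t => S t ^ 2) t := by
  simp only [indicator, mem_Ici, mem_Ico]
  split_ifs <;> grind

theorem integral_sq_ite_sub_indicator_Ici (S : ℝ → ℝ) {y : ℝ} (hy : 0 ≤ y)
    (hS : IntervalIntegrable S volume 0 y) (hS2 : IntegrableOn (fun t => S t ^ 2) (Ioi 0)) :
    ∫ t, ((if 0 ≤ t then 1 - S t else 0) - (Ici y).indicator (fun _ => (1 : ℝ)) t) ^ 2 =
      y - 2 * (∫ t in 0..y, S t) + ∫ t in Ioi 0, S t ^ 2 := by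
  have hS' : IntegrableOn (fun t => 1 - 2 * S t) (Ico 0 y) :=
    (intervalIntegrable_const.sub (hS.const_mul 2)).1.congr_set_ae Ico_ae_eq_Ioc
  simp_rw [sq_ite_sub_indicator_Ici S hy]
  rw [integral_add (hS'.integrable_indicator measurableSet_Ico)
      ((hS2.congr_set_ae Ioi_ae_eq_Ici.symm).integrable_indicator measurableSet_Ici),
    integral_indicator measurableSet_Ico, integral_indicator measurableSet_Ici,
    integral_Ici_eq_integral_Ioi, setIntegral_congr_set Ico_ae_eq_Ioc,
    ← intervalIntegral.integral_of_le hy,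
    intervalIntegral.integral_sub intervalIntegrable_const (hS.const_mul 2),
    intervalIntegral.integral_const_mul, intervalIntegral.integral_const]
  simp

theorem lowerIncGamma_eq_intervalIntegral (s : ℝ) {z : ℝ} (hz : 0 ≤ z) :
    lowerIncGamma s z = ∫ t in 0..z, t ^ (s - 1) * exp (-t) :=
  (intervalIntegral.integral_of_le hz).symm

theorem hasDerivAt_intervalIntegral_rpow_mul_exp_neg {p : ℝ} (hp : 0 ≤ p) (z : ℝ) :
    HasDerivAt (fun z => ∫ t in 0..z, t ^ p * exp (-t)) (z ^ p * exp (-z)) z :=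
  have hf : Continuous fun t : ℝ => t ^ p * exp (-t) := by fun_prop
  intervalIntegral.integral_hasDerivAt_right (hf.intervalIntegrable _ _)
    (hf.stronglyMeasurableAtFilter _ _) hf.continuousAt

theorem intervalIntegral_exp_neg_rpow {α x : ℝ} (hα : 0 < α) (hx : 0 ≤ x) :
    ∫ t in 0..x, exp (-t ^ α) = lowerIncGamma (1 + 1 / α) (x ^ α) + x * exp (-x ^ α) := by
  set P := fun z => ∫ t in 0..z, t ^ (1 + 1 / α - 1) * exp (-t)
  have hP : ∀ z, HasDerivAt P (z ^ (1 + 1 / α - 1) * exp (-z)) z :=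
    hasDerivAt_intervalIntegral_rpow_mul_exp_neg (by rw [add_sub_cancel_left]; positivity)
  have hG : ∀ t ∈ Ioo 0 x,
      HasDerivAt (fun t => P (t ^ α) + t * exp (-t ^ α)) (exp (-t ^ α)) t := by
    intro t ht
    have hu := hasDerivAt_rpow_const (x := t) (p := α) (Or.inl ht.1.ne')
    refine (((hP _).comp t hu).add ((hasDerivAt_id t).mul hu.neg.exp)).congr_deriv ?_
    rw [add_sub_cancel_left, ← rpow_mul ht.1.le, mul_one_div_cancel hα.ne', rpow_one, id,
      Pi.neg_apply]
    ring
  have hu : Continuous fun t : ℝ => t ^ α := continuous_rpow_const hα.le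
  have hP_cont : Continuous P := continuous_iff_continuousAt.2 fun z => (hP z).continuousAt
  have hG_cont : Continuous fun t => P (t ^ α) + t * exp (-t ^ α) := by fun_prop
  have hS : Continuous fun t => exp (-t ^ α) := by fun_prop
  rw [intervalIntegral.integral_eq_sub_of_hasDeriv_right_of_le hx hG_cont.continuousOn
      (fun t ht => (hG t ht).hasDerivWithinAt) (hS.intervalIntegrable _ _),
    zero_rpow hα.ne', lowerIncGamma_eq_intervalIntegral _ (rpow_nonneg hx α)]
  simp [P]

theorem intervalIntegral_exp_neg_div_rpow {α β y : ℝ} (hα : 0 < α) (hβ : 0 < β) (hy : 0 ≤ y) :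
    ∫ t in 0..y, exp (-(t / β) ^ α) =
      β * lowerIncGamma (1 + 1 / α) ((y / β) ^ α) + y * exp (-(y / β) ^ α) := by
  rw [intervalIntegral.integral_comp_div (fun t => exp (-t ^ α)) hβ.ne', zero_div,
    intervalIntegral_exp_neg_rpow hα (div_nonneg hy hβ.le), smul_eq_mul]
  field_simp

theorem exp_neg_div_rpow_sq (α β t : ℝ) :
    exp (-(t / β) ^ α) ^ 2 = exp (-2 * (β⁻¹ * t) ^ α) := by
  rw [← exp_nat_mul, div_eq_inv_mul]
  ring_nf

theorem integrableOn_exp_neg_div_rpow_sq {α β : ℝ} (hα : 0 < α) (hβ : 0 < β) :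
    IntegrableOn (fun t => exp (-(t / β) ^ α) ^ 2) (Ioi 0) := by
  simp_rw [exp_neg_div_rpow_sq]
  rw [integrableOn_Ioi_comp_mul_left_iff (fun x => exp (-2 * x ^ α)) 0 (inv_pos.2 hβ), mul_zero]
  simpa using integrableOn_rpow_mul_exp_neg_mul_rpow (s := 0) (by norm_num) hα two_pos

theorem integral_exp_neg_div_rpow_sq {α β : ℝ} (hα : 0 < α) (hβ : 0 < β) :
    ∫ t in Ioi 0, exp (-(t / β) ^ α) ^ 2 = 2 ^ (-(1 / α)) * β * Gamma (1 + 1 / α) := by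
  simp_rw [exp_neg_div_rpow_sq]
  rw [integral_comp_mul_left_Ioi (fun x => exp (-2 * x ^ α)) 0 (inv_pos.2 hβ), mul_zero,
    integral_exp_neg_mul_rpow hα two_pos, inv_inv, smul_eq_mul, neg_div, add_comm (1 / α)]
  ring

/-- The CRPS of the Weibull(α,β) cdf `F` at an observation `y ≥ 0` equals
`y(2F(y) − 1) − 2β·γ(1+1/α, (y/β)^α) + 2^{−1/α} β Γ(1+1/α)`. -/
theorem crps_weibull (α β : ℝ) (hα : 0 < α) (hβ : 0 < β) (y : ℝ) (hy : 0 ≤ y)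
    (F : ℝ → ℝ) (hF : F = fun t => if 0 ≤ t then 1 - Real.exp (-(t / β) ^ α) else 0) :
    (∫ t : ℝ, (F t - Set.indicator (Set.Ici y) (fun _ => (1 : ℝ)) t) ^ 2) =
      y * (2 * F y - 1) - 2 * β * lowerIncGamma (1 + 1 / α) ((y / β) ^ α) +
        2 ^ (-(1 / α) : ℝ) * β * Real.Gamma (1 + 1 / α) := by
  have hS : Continuous fun t => exp (-(t / β) ^ α) := by fun_prop (disch := exact hα.le)
  subst hF
  rw [integral_sq_ite_sub_indicator_Ici _ hy (hS.intervalIntegrable _ _)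
      (integrableOn_exp_neg_div_rpow_sq hα hβ), intervalIntegral_exp_neg_div_rpow hα hβ hy,
    integral_exp_neg_div_rpow_sq hα hβ]
  simp only [if_pos hy]
  ring
end

section
/- The continuous ranked probability score can be written as CRPS(F,y) = E_F|Y − y| − ½ E_F|Y − Y'|, where Y, Y' are i.i.d. with cdf F having finite first moment. -/
/-!
The function `t ↦ (𝟙{a ≤ t} - 𝟙{b ≤ t})²` is the indicator of the interval between `a` and `b`,
so its integral is `|a - b|`. For fixed `t`, the variables `B = 𝟙{Y ≤ t}`, `B' = 𝟙{Y' ≤ t}` are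
i.i.d. with mean `F t`, so `E (B - c)² = Var B + (F t - c)²` and `E (B - B')² = 2 Var B`, whence
`(F t - c)² = E (B - c)² - ½ E (B - B')²`; take `c = 𝟙{y ≤ t}`. Integrating over `t` and
exchanging the integrals (Fubini) gives the decomposition.
-/

open MeasureTheory ProbabilityTheory Real Set

lemma sq_sub_indicator_Ici_eq_indicator_Ico (a b t : ℝ) :
    ((Ici a).indicator 1 t - (Ici b).indicator 1 t) ^ 2 =
      (Ico (min a b) (max a b)).indicator (1 : ℝ → ℝ) t := by
  by_cases ha : a ≤ t <;> by_cases hb : b ≤ t <;> simp [indicator_apply, ha, hb]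

lemma integrable_sq_sub_indicator_Ici (a b : ℝ) :
    Integrable fun t => ((Ici a).indicator (1 : ℝ → ℝ) t - (Ici b).indicator 1 t) ^ 2 := by
  simp_rw [sq_sub_indicator_Ici_eq_indicator_Ico]
  exact (integrableOn_const measure_Ico_lt_top.ne).integrable_indicator measurableSet_Ico

lemma integral_sq_sub_indicator_Ici (a b : ℝ) :
    ∫ t, ((Ici a).indicator (1 : ℝ → ℝ) t - (Ici b).indicator 1 t) ^ 2 = |a - b| := by
  simp_rw [sq_sub_indicator_Ici_eq_indicator_Ico, integral_indicator_one measurableSet_Ico,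
    measureReal_def, Real.volume_Ico, max_sub_min_eq_abs']
  simp

section Fubini

variable {Ω : Type*} [MeasurableSpace Ω] {μ : Measure Ω} [SFinite μ] {Z W : Ω → ℝ}

lemma measurable_indicator_Ici_prod (hZ : Measurable Z) :
    Measurable fun p : ℝ × Ω => (Ici (Z p.2)).indicator (1 : ℝ → ℝ) p.1 :=
  measurable_const.indicator (measurableSet_le (hZ.comp measurable_snd) measurable_fst)

lemma integrable_prod_sq_sub_indicator_Ici (hZ : Measurable Z) (hW : Measurable W)
    (h : Integrable (fun ω => |Z ω - W ω|) μ) :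
    Integrable (fun p : ℝ × Ω =>
      ((Ici (Z p.2)).indicator (1 : ℝ → ℝ) p.1 - (Ici (W p.2)).indicator 1 p.1) ^ 2)
      (volume.prod μ) := by
  refine (integrable_prod_iff' ?_).2
    ⟨ae_of_all _ fun ω => integrable_sq_sub_indicator_Ici (Z ω) (W ω), ?_⟩
  · exact (((measurable_indicator_Ici_prod hZ).sub
      (measurable_indicator_Ici_prod hW)).pow_const 2).aestronglyMeasurable
  · simpa [integral_sq_sub_indicator_Ici] using h

lemma integral_integral_sq_sub_indicator_Ici (hZ : Measurable Z) (hW : Measurable W)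
    (h : Integrable (fun ω => |Z ω - W ω|) μ) :
    ∫ t, ∫ ω, ((Ici (Z ω)).indicator (1 : ℝ → ℝ) t - (Ici (W ω)).indicator 1 t) ^ 2 ∂μ =
      ∫ ω, |Z ω - W ω| ∂μ := by
  rw [integral_integral_swap (integrable_prod_sq_sub_indicator_Ici hZ hW h)]
  simp_rw [integral_sq_sub_indicator_Ici]

end Fubini

section Variance

variable {Ω : Type*} [MeasurableSpace Ω] {P : Measure Ω} [IsProbabilityMeasure P]
  {X X' : Ω → ℝ}

lemma integral_sq_eq_variance_add_sq (hX : MemLp X 2 P) :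
    ∫ ω, X ω ^ 2 ∂P = Var[X; P] + (∫ ω, X ω ∂P) ^ 2 := by
  rw [variance_eq_sub hX]
  simp

lemma sq_integral_sub_eq_of_indepFun_of_identDistrib (hX : MemLp X 2 P)
    (hindep : IndepFun X X' P) (hident : IdentDistrib X X' P P) (c : ℝ) :
    (∫ ω, X ω ∂P - c) ^ 2 =
      ∫ ω, (X ω - c) ^ 2 ∂P - 1 / 2 * ∫ ω, (X ω - X' ω) ^ 2 ∂P := by
  have hX' : MemLp X' 2 P := hident.memLp_snd hX
  have hXc : ∫ ω, (X ω - c) ^ 2 ∂P = Var[X; P] + (∫ ω, X ω ∂P - c) ^ 2 := by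
    rw [integral_sq_eq_variance_add_sq (X := fun ω => X ω - c) (hX.sub (memLp_const c)),
      variance_sub_const hX.1, integral_sub (hX.integrable one_le_two) (integrable_const c)]
    simp
  have hXX' : ∫ ω, (X ω - X' ω) ^ 2 ∂P = 2 * Var[X; P] := by
    rw [integral_sq_eq_variance_add_sq (X := fun ω => X ω - X' ω) (hX.sub hX'),
      variance_fun_sub hX hX', hindep.covariance_eq_zero hX hX', ← hident.variance_eq,
      integral_sub (hX.integrable one_le_two) (hX'.integrable one_le_two), hident.integral_eq]
    ring
  linarith

end Variance

/-- The continuous ranked probability score can be written as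
`CRPS(F,y) = E|Y − y| − ½ E|Y − Y'|` for `Y, Y'` i.i.d. with cdf `F` and finite
first moment. -/
theorem crps_decomposition {Ω : Type*} [MeasurableSpace Ω] (P : Measure Ω)
    [IsProbabilityMeasure P] (Y Y' : Ω → ℝ) (hY : Measurable Y) (hY' : Measurable Y')
    (hindep : IndepFun Y Y' P) (hid : P.map Y = P.map Y') (hint : Integrable Y P)
    (y : ℝ) (F : ℝ → ℝ) (hF : F = fun t => (P {ω | Y ω ≤ t}).toReal) :
    (∫ t : ℝ, (F t - Set.indicator (Set.Ici y) (fun _ => (1 : ℝ)) t) ^ 2) =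
      (∫ ω, |Y ω - y| ∂P) - (1 / 2) * ∫ ω, |Y ω - Y' ω| ∂P := by
  have hident : IdentDistrib Y Y' P P := ⟨hY.aemeasurable, hY'.aemeasurable, hid⟩
  have hpoint : ∀ t, (F t - (Ici y).indicator (fun _ => (1 : ℝ)) t) ^ 2 =
      ∫ ω, ((Ici (Y ω)).indicator (1 : ℝ → ℝ) t - (Ici y).indicator 1 t) ^ 2 ∂P -
        1 / 2 *
          ∫ ω, ((Ici (Y ω)).indicator (1 : ℝ → ℝ) t - (Ici (Y' ω)).indicator 1 t) ^ 2 ∂P := by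
    intro t
    have hFt : F t = ∫ ω, (Ici (Y ω)).indicator (1 : ℝ → ℝ) t ∂P := by
      rw [hF]
      exact (integral_indicator_one (hY measurableSet_Iic)).symm
    have hu : Measurable ((Iic t).indicator (1 : ℝ → ℝ)) :=
      measurable_const.indicator measurableSet_Iic
    rw [hFt]
    exact sq_integral_sub_eq_of_indepFun_of_identDistrib
      ((memLp_const 1).indicator (hY measurableSet_Iic)) (hindep.comp hu hu) (hident.comp hu) _
  have hYy : Integrable (fun ω => |Y ω - y|) P := (hint.sub (integrable_const y)).abs
  have hYY' : Integrable (fun ω => |Y ω - Y' ω|) P := (hint.sub (hident.integrable_snd hint)).abs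
  rw [integral_congr_ae (ae_of_all _ hpoint),
    integral_sub (integrable_prod_sq_sub_indicator_Ici hY measurable_const hYy).integral_prod_left
      ((integrable_prod_sq_sub_indicator_Ici hY hY' hYY').integral_prod_left.const_mul _),
    integral_const_mul, integral_integral_sq_sub_indicator_Ici hY measurable_const hYy,
    integral_integral_sq_sub_indicator_Ici hY hY' hYY']
end
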